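/- arXiv:2303.11253 — 2 statements merged into one kernel-verified Lean document; each statement's English description precedes it below -/
import Mathlib

section
/- Let (Ω, μ) be a probability space, let E = EuclideanSpace ℝ (Fin n), let Y₁ : Ω → E, X : Ω → E, and e₂ : Ω → E be random vectors with Y₂ := X + e₂, such that e₂ has zero mean and e₂ is independent of the pair (Y₁, X). Let f, g : E → E be measurable functions such that f ∘ Y₁, g ∘ Y₁, X, and e₂ are all square-integrable. Then ∫ ‖f (Y₁ ω) − Y₂ ω‖² dμ ≤ ∫ ‖g (Y₁ ω) − Y₂ ω‖² dμ if and only if ∫ ‖f (Y₁ ω) − X ω‖² dμ ≤ ∫ ‖g (Y₁ ω) − X ω‖² dμ. -/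
/-!
Expanding the square, `‖W - e‖² = ‖W‖² - 2⟪W, e⟫ + ‖e‖²`, and for independent `W` and `e` the
cross term has expectation `⟪𝔼 W, 𝔼 e⟫ = 0`. Applied to `W = h ∘ Y₁ - X` this shows that the risk of
any denoiser `h` against the noisy target `X + e₂` exceeds its risk against the clean target `X`
by the constant `𝔼 ‖e₂‖²`, which does not depend on `h`.
-/

open MeasureTheory ProbabilityTheory

section

variable {Ω : Type*} [MeasurableSpace Ω] {μ : Measure Ω}
  {E : Type*} [NormedAddCommGroup E] [InnerProductSpace ℝ E] [CompleteSpace E]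
  [MeasurableSpace E] [BorelSpace E]

lemma integral_inner_eq_zero_of_indepFun {W e : Ω → E} (hW : Integrable W μ)
    (he : Integrable e μ) (he0 : μ[e] = 0) (hWe : W ⟂ᵢ[μ] e) :
    ∫ ω, inner ℝ (W ω) (e ω) ∂μ = 0 := by
  rw [← ContinuousLinearMap.map_zero (innerSL ℝ μ[W]), ← he0]
  exact hWe.integral_bilin hW he (innerSL ℝ)

lemma integral_norm_sub_sq_of_indepFun [IsFiniteMeasure μ] {W e : Ω → E}
    (hW : MemLp W 2 μ) (he : MemLp e 2 μ) (he0 : μ[e] = 0) (hWe : W ⟂ᵢ[μ] e) :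
    ∫ ω, ‖W ω - e ω‖ ^ 2 ∂μ = ∫ ω, ‖W ω‖ ^ 2 ∂μ + ∫ ω, ‖e ω‖ ^ 2 ∂μ := by
  have hinner : Integrable (fun ω ↦ 2 * inner ℝ (W ω) (e ω)) μ :=
    (hWe.integrable_bilin (hW.integrable one_le_two) (he.integrable one_le_two)
      (innerSL ℝ)).const_mul 2
  have hWsq : Integrable (fun ω ↦ ‖W ω‖ ^ 2) μ := hW.integrable_norm_pow two_ne_zero
  simp only [norm_sub_sq_real]
  rw [integral_add (hWsq.sub' hinner) (he.integrable_norm_pow two_ne_zero),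
    integral_sub hWsq hinner, integral_const_mul,
    integral_inner_eq_zero_of_indepFun (hW.integrable one_le_two) (he.integrable one_le_two)
      he0 hWe]
  ring

lemma integral_norm_sub_add_sq_of_indepFun [IsFiniteMeasure μ] [SecondCountableTopology E]
    {𝓨 : Type*} [MeasurableSpace 𝓨]
    {Y : Ω → 𝓨} {X e : Ω → E} {h : 𝓨 → E} (hh : Measurable h)
    (hhY : MemLp (fun ω ↦ h (Y ω)) 2 μ) (hX : MemLp X 2 μ) (he : MemLp e 2 μ)
    (he0 : μ[e] = 0) (hindep : IndepFun (fun ω ↦ (Y ω, X ω)) e μ) :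
    ∫ ω, ‖h (Y ω) - (X ω + e ω)‖ ^ 2 ∂μ =
      ∫ ω, ‖h (Y ω) - X ω‖ ^ 2 ∂μ + ∫ ω, ‖e ω‖ ^ 2 ∂μ := by
  simp only [← sub_sub]
  exact integral_norm_sub_sq_of_indepFun (hhY.sub hX) he he0
    (hindep.comp ((hh.comp measurable_fst).sub measurable_snd) measurable_id)

end

theorem noise2noise_risk_comparison
    {Ω : Type*} [MeasurableSpace Ω] {μ : Measure Ω} [IsProbabilityMeasure μ]
    {n : ℕ} (Y₁ X e₂ : Ω → EuclideanSpace ℝ (Fin n))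
    (Y₂ : Ω → EuclideanSpace ℝ (Fin n)) (hY₂ : Y₂ = fun ω => X ω + e₂ ω)
    (he0 : ∫ ω, e₂ ω ∂μ = 0)
    (hindep : IndepFun (fun ω => (Y₁ ω, X ω)) e₂ μ)
    (f g : EuclideanSpace ℝ (Fin n) → EuclideanSpace ℝ (Fin n))
    (hf : Measurable f) (hg : Measurable g)
    (hfY : MemLp (fun ω => f (Y₁ ω)) 2 μ) (hgY : MemLp (fun ω => g (Y₁ ω)) 2 μ)
    (hX : MemLp X 2 μ) (he2 : MemLp e₂ 2 μ) :
    (∫ ω, ‖f (Y₁ ω) - Y₂ ω‖ ^ 2 ∂μ ≤ ∫ ω, ‖g (Y₁ ω) - Y₂ ω‖ ^ 2 ∂μ) ↔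
      (∫ ω, ‖f (Y₁ ω) - X ω‖ ^ 2 ∂μ ≤ ∫ ω, ‖g (Y₁ ω) - X ω‖ ^ 2 ∂μ) := by
  subst hY₂
  rw [integral_norm_sub_add_sq_of_indepFun hf hfY hX he2 he0 hindep,
    integral_norm_sub_add_sq_of_indepFun hg hgY hX he2 he0 hindep, add_le_add_iff_right]
end

section
/- Let (Ω, μ) be a probability space, let E = EuclideanSpace ℝ (Fin n), let Y₁ : Ω → E, X : Ω → E, and e₂ : Ω → E be random vectors with Y₂ := X + e₂, such that e₂ has zero mean and e₂ is independent of the pair (Y₁, X). Let Θ be a type and F : Θ → E → E a parametrized family of measurable functions such that for every θ, F θ ∘ Y₁ is square-integrable, and X and e₂ are square-integrable. Define the Noise2Clean risk R_N2C(θ) = ∫ ‖F θ (Y₁ ω) − X ω‖² dμ and the Noise2Noise risk R_N2N(θ) = ∫ ‖F θ (Y₁ ω) − Y₂ ω‖² dμ. Then for every θ₀ ∈ Θ, θ₀ is a global minimizer of R_N2N over Θ if and only if θ₀ is a global minimizer of R_N2C over Θ. -/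
/-!
Write `F θ (Y₁) - Y₂ = (F θ (Y₁) - X) - e₂`. The first term is a function of `(Y₁, X)`, hence
independent of the centred noise `e₂`, so the cross term of the expanded square has expectation
`⟪E[F θ (Y₁) - X], E[e₂]⟫ = 0`. Thus `R_N2N θ = R_N2C θ + E‖e₂‖²`, and the two risks differ by a
constant independent of `θ`.
-/

open MeasureTheory ProbabilityTheory
open scoped RealInnerProductSpace

namespace ProbabilityTheory.IndepFun

variable {Ω E : Type*} [MeasurableSpace Ω] {μ : Measure Ω}
  [NormedAddCommGroup E] [InnerProductSpace ℝ E] [CompleteSpace E]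
  [MeasurableSpace E] [BorelSpace E] {U V : Ω → E}

theorem integral_inner_eq_zero (hUV : U ⟂ᵢ[μ] V) (hU : Integrable U μ) (hV : Integrable V μ)
    (hV₀ : μ[V] = 0) : ∫ ω, ⟪U ω, V ω⟫ ∂μ = 0 :=
  (hUV.integral_bilin hU hV (innerSL ℝ)).trans (by simp [hV₀])

theorem integral_norm_sub_sq [IsFiniteMeasure μ] (hUV : U ⟂ᵢ[μ] V) (hU : MemLp U 2 μ)
    (hV : MemLp V 2 μ) (hV₀ : μ[V] = 0) :
    ∫ ω, ‖U ω - V ω‖ ^ 2 ∂μ = ∫ ω, ‖U ω‖ ^ 2 ∂μ + ∫ ω, ‖V ω‖ ^ 2 ∂μ := by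
  have hU₁ := hU.integrable one_le_two
  have hV₁ := hV.integrable one_le_two
  have hUU : Integrable (fun ω ↦ ‖U ω‖ ^ 2) μ := hU.norm.integrable_sq
  have hVV : Integrable (fun ω ↦ ‖V ω‖ ^ 2) μ := hV.norm.integrable_sq
  have hUV₁ : Integrable (fun ω ↦ 2 * ⟪U ω, V ω⟫) μ :=
    (hUV.integrable_bilin hU₁ hV₁ (innerSL ℝ)).const_mul 2
  simp_rw [norm_sub_sq_real]
  rw [integral_add (f := fun ω ↦ ‖U ω‖ ^ 2 - 2 * ⟪U ω, V ω⟫) (hUU.sub hUV₁) hVV,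
    integral_sub hUU hUV₁, integral_const_mul, hUV.integral_inner_eq_zero hU₁ hV₁ hV₀,
    mul_zero, sub_zero]

end ProbabilityTheory.IndepFun

theorem noise2noise_argmin_equivalence
    {Ω : Type*} [MeasurableSpace Ω] {μ : Measure Ω} [IsProbabilityMeasure μ]
    {n : ℕ} (Y₁ X e₂ : Ω → EuclideanSpace ℝ (Fin n))
    (Y₂ : Ω → EuclideanSpace ℝ (Fin n)) (hY₂ : Y₂ = fun ω => X ω + e₂ ω)
    (he0 : ∫ ω, e₂ ω ∂μ = 0)
    (hindep : IndepFun (fun ω => (Y₁ ω, X ω)) e₂ μ)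
    {Θ : Type*} (F : Θ → EuclideanSpace ℝ (Fin n) → EuclideanSpace ℝ (Fin n))
    (hF : ∀ θ, Measurable (F θ))
    (hFY : ∀ θ, MemLp (fun ω => F θ (Y₁ ω)) 2 μ)
    (hX : MemLp X 2 μ) (he2 : MemLp e₂ 2 μ)
    (R_N2C : Θ → ℝ) (hR_N2C : R_N2C = fun θ => ∫ ω, ‖F θ (Y₁ ω) - X ω‖ ^ 2 ∂μ)
    (R_N2N : Θ → ℝ) (hR_N2N : R_N2N = fun θ => ∫ ω, ‖F θ (Y₁ ω) - Y₂ ω‖ ^ 2 ∂μ) :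
    ∀ θ₀ : Θ, (∀ θ : Θ, R_N2N θ₀ ≤ R_N2N θ) ↔ (∀ θ : Θ, R_N2C θ₀ ≤ R_N2C θ) := by
  have risk_eq (θ : Θ) : R_N2N θ = R_N2C θ + ∫ ω, ‖e₂ ω‖ ^ 2 ∂μ := by
    have hind : IndepFun (fun ω ↦ F θ (Y₁ ω) - X ω) e₂ μ :=
      hindep.comp (φ := fun p : EuclideanSpace ℝ (Fin n) × _ ↦ F θ p.1 - p.2) (by fun_prop)
        measurable_id
    simp only [hR_N2N, hR_N2C, hY₂, ← sub_sub]
    exact hind.integral_norm_sub_sq ((hFY θ).sub hX) he2 he0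
  intro θ₀
  simp only [risk_eq, add_le_add_iff_right]
end
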